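/- arXiv:2210.08075 — 2 statements merged into one kernel-verified Lean document; each statement's English description precedes it below -/
import Mathlib

section
/- Let c = (1/8)·(2π·coth(2π) + 1) and let 0 ≤ β̂ < π²/(2c). Then for every vector F = (F_{lr})_{1≤l≤M, 0≤r≤N} ∈ ℝ^{M×(N+1)} there exists B ∈ ℝ^{M×(N+1)} such that 𝒫(B) = 0, i.e. the algebraic system −B_{lr} + β̂·∑_{0≤n≤N, n+r odd} B_{ln}·(n/2)·(1/(γ_{ln}γ_{lr}))·(1/(n+r) + 1/(n−r)) = F_{lr} for all 1 ≤ l ≤ M, 0 ≤ r ≤ N, is solvable. -/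
open Real

/-- The real hyperbolic cotangent, `coth x = cosh x / sinh x`. -/
noncomputable def cothR (x : ℝ) : ℝ := Real.cosh x / Real.sinh x

/-- The constant `c = (1/8)·(2π·coth(2π) + 1)`. -/
noncomputable def cConst : ℝ := (1/8) * (2 * π * cothR (2 * π) + 1)

/-- `b_n = 1/2` if `n = 0`, `b_n = 1/4` otherwise. -/
noncomputable def bCoef (n : ℕ) : ℝ := if n = 0 then 1/2 else 1/4

/-- `α_{mn} = 4π²m² + π²n²`. -/
noncomputable def alphaMN (m n : ℕ) : ℝ := 4 * π ^ 2 * (m : ℝ) ^ 2 + π ^ 2 * (n : ℝ) ^ 2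

/-- `γ_{mn} = √(α_{mn}·b_n)`. -/
noncomputable def gammaMN (m n : ℕ) : ℝ := Real.sqrt (alphaMN m n * bCoef n)

/-- The map `𝒫 : ℝ^{M×(N+1)} → ℝ^{M×(N+1)}`, where the row index `l` ranges over `{1,…,M}`
(represented by `l : Fin M` standing for `l+1`) and the column index `r` over `{0,…,N}`:
`𝒫(B)_{lr} = −B_{lr} + β̂·∑_{0≤n≤N, n+r odd} B_{ln}·(n/2)·(1/(γ_{ln}γ_{lr}))·(1/(n+r)+1/(n−r)) − F_{lr}`. -/
noncomputable def Pop (M N : ℕ) (β : ℝ) (F : Fin M → Fin (N + 1) → ℝ)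
    (B : Fin M → Fin (N + 1) → ℝ) : Fin M → Fin (N + 1) → ℝ :=
  fun l r =>
    -B l r
      + β * (∑ n : Fin (N + 1),
          if Odd ((n : ℕ) + (r : ℕ)) then
            B l n * ((n : ℕ) / 2 : ℝ)
              * (1 / (gammaMN ((l : ℕ) + 1) (n : ℕ) * gammaMN ((l : ℕ) + 1) (r : ℕ)))
              * (1 / (((n : ℕ) : ℝ) + ((r : ℕ) : ℝ)) + 1 / (((n : ℕ) : ℝ) - ((r : ℕ) : ℝ)))
          else 0)
      - F l r

/-! ### Auxiliary lemmas -/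

lemma bCoef_pos (n : ℕ) : 0 < bCoef n := by
  unfold bCoef; split <;> norm_num

lemma bCoef_ge (n : ℕ) : (1/4 : ℝ) ≤ bCoef n := by
  unfold bCoef; split <;> norm_num

lemma alphaMN_pos (m n : ℕ) (hm : 1 ≤ m) : 0 < alphaMN m n := by
  unfold alphaMN
  have h1 : (1:ℝ) ≤ (m:ℝ) := by exact_mod_cast hm
  have hπ2 : (0:ℝ) < π ^ 2 := by positivity
  have hm2 : (1:ℝ) ≤ (m:ℝ) ^ 2 := by nlinarith
  nlinarith [mul_nonneg (sq_nonneg π) (sq_nonneg (n:ℝ)), mul_le_mul_of_nonneg_left hm2 hπ2.le]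

lemma gammaMN_pos (m n : ℕ) (hm : 1 ≤ m) : 0 < gammaMN m n := by
  unfold gammaMN
  exact Real.sqrt_pos.2 (mul_pos (alphaMN_pos m n hm) (bCoef_pos n))

lemma gammaMN_sq (m n : ℕ) (hm : 1 ≤ m) :
    gammaMN m n ^ 2 = alphaMN m n * bCoef n := by
  unfold gammaMN
  exact Real.sq_sqrt (le_of_lt (mul_pos (alphaMN_pos m n hm) (bCoef_pos n)))

lemma one_div_gammaMN_sq_le (m n : ℕ) (hm : 1 ≤ m) :
    (1 / gammaMN m n) ^ 2 ≤ 4 / π ^ 2 * (1 / ((n:ℝ) ^ 2 + 4)) := by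
  have hπ := Real.pi_pos
  have hγ := gammaMN_pos m n hm
  have hm1 : (1:ℝ) ≤ (m:ℝ) := by exact_mod_cast hm
  have hb := bCoef_ge n
  have hα : π ^ 2 * ((n:ℝ) ^ 2 + 4) / 4 ≤ gammaMN m n ^ 2 := by
    rw [gammaMN_sq m n hm]
    have hπ2 : (0:ℝ) < π ^ 2 := by positivity
    have hm2 : (1:ℝ) ≤ (m:ℝ) ^ 2 := by nlinarith
    have hA : π ^ 2 * ((n:ℝ) ^ 2 + 4) ≤ alphaMN m n := by
      unfold alphaMN
      nlinarith [mul_le_mul_of_nonneg_left hm2 hπ2.le]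
    have hA0 : 0 < alphaMN m n := alphaMN_pos m n hm
    have hmul : alphaMN m n * (1/4) ≤ alphaMN m n * bCoef n :=
      mul_le_mul_of_nonneg_left hb hA0.le
    linarith
  have hrhs : 4 / π ^ 2 * (1 / ((n:ℝ) ^ 2 + 4)) = 1 / (π ^ 2 * ((n:ℝ) ^ 2 + 4) / 4) := by
    rw [one_div, one_div]
    field_simp
  rw [hrhs, div_pow, one_pow]
  apply one_div_le_one_div_of_le
  · positivity
  · nlinarith

/-- Partial sums of `∑ 1/(r²+4)` are bounded by `19/12`. -/
lemma sum_one_div_sq_add_four_le (N : ℕ) :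
    ∑ r ∈ Finset.range N, (1:ℝ) / ((r:ℝ) ^ 2 + 4) ≤ 19/12 := by
  have key : ∀ K : ℕ, 1 ≤ K →
      ∑ r ∈ Finset.range K, (1:ℝ) / ((r:ℝ) ^ 2 + 4) ≤ 19/12 - (4/3) / (K:ℝ) := by
    intro K hK
    induction K, hK using Nat.le_induction with
    | base => simp [Finset.sum_range_one]; norm_num
    | succ K hK ih =>
      rw [Finset.sum_range_succ]
      have hK1 : (1:ℝ) ≤ (K:ℝ) := by exact_mod_cast hK
      have hstep : (1:ℝ) / ((K:ℝ) ^ 2 + 4) ≤ (4/3) / (K:ℝ) - (4/3) / ((K:ℝ) + 1) := by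
        rw [div_sub_div _ _ (by linarith) (by linarith)]
        rw [div_le_div_iff₀ (by nlinarith) (by nlinarith)]
        ring_nf
        nlinarith
      push_cast
      linarith
  rcases Nat.eq_zero_or_pos N with h | h
  · simp [h]; norm_num
  · have hN1 : (0:ℝ) < (N:ℝ) := by exact_mod_cast h
    have h2 : (0:ℝ) ≤ (4/3) / (N:ℝ) := by positivity
    linarith [key N h]

lemma cConst_ge : (7/8 : ℝ) ≤ cConst := by
  have hπ := Real.pi_gt_three
  have hπ0 := Real.pi_pos
  have hs : 0 < Real.sinh (2 * π) := Real.sinh_pos_iff.2 (by linarith)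
  have hc : Real.sinh (2 * π) ≤ Real.cosh (2 * π) := by
    nlinarith [Real.cosh_sub_sinh (2 * π), Real.exp_pos (-(2 * π))]
  have hcoth : (1:ℝ) ≤ cothR (2 * π) := by
    rw [cothR, le_div_iff₀ hs]; linarith
  unfold cConst
  nlinarith

lemma cConst_pos : (0:ℝ) < cConst := lt_of_lt_of_le (by norm_num) cConst_ge

/-- The row operator as a linear map. -/
noncomputable def auxL (N : ℕ) (β : ℝ) (m : ℕ) :
    (Fin (N + 1) → ℝ) →ₗ[ℝ] (Fin (N + 1) → ℝ) where
  toFun x := fun r =>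
    -x r
      + β * (∑ n : Fin (N + 1),
          if Odd ((n : ℕ) + (r : ℕ)) then
            x n * ((n : ℕ) / 2 : ℝ)
              * (1 / (gammaMN m (n : ℕ) * gammaMN m (r : ℕ)))
              * (1 / (((n : ℕ) : ℝ) + ((r : ℕ) : ℝ)) + 1 / (((n : ℕ) : ℝ) - ((r : ℕ) : ℝ)))
          else 0)
  map_add' x y := by
    funext r
    have h : ∀ n : Fin (N + 1),
        (if Odd ((n : ℕ) + (r : ℕ)) then
            (x n + y n) * ((n : ℕ) / 2 : ℝ)
              * (1 / (gammaMN m (n : ℕ) * gammaMN m (r : ℕ)))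
              * (1 / (((n : ℕ) : ℝ) + ((r : ℕ) : ℝ)) + 1 / (((n : ℕ) : ℝ) - ((r : ℕ) : ℝ)))
          else 0)
        = (if Odd ((n : ℕ) + (r : ℕ)) then
            x n * ((n : ℕ) / 2 : ℝ)
              * (1 / (gammaMN m (n : ℕ) * gammaMN m (r : ℕ)))
              * (1 / (((n : ℕ) : ℝ) + ((r : ℕ) : ℝ)) + 1 / (((n : ℕ) : ℝ) - ((r : ℕ) : ℝ)))
          else 0)
        + (if Odd ((n : ℕ) + (r : ℕ)) then
            y n * ((n : ℕ) / 2 : ℝ)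
              * (1 / (gammaMN m (n : ℕ) * gammaMN m (r : ℕ)))
              * (1 / (((n : ℕ) : ℝ) + ((r : ℕ) : ℝ)) + 1 / (((n : ℕ) : ℝ) - ((r : ℕ) : ℝ)))
          else 0) := by
      intro n; split_ifs <;> ring
    simp only [Pi.add_apply, h, Finset.sum_add_distrib]
    ring
  map_smul' c x := by
    funext r
    have h : ∀ n : Fin (N + 1),
        (if Odd ((n : ℕ) + (r : ℕ)) then
            (c * x n) * ((n : ℕ) / 2 : ℝ)
              * (1 / (gammaMN m (n : ℕ) * gammaMN m (r : ℕ)))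
              * (1 / (((n : ℕ) : ℝ) + ((r : ℕ) : ℝ)) + 1 / (((n : ℕ) : ℝ) - ((r : ℕ) : ℝ)))
          else 0)
        = c * (if Odd ((n : ℕ) + (r : ℕ)) then
            x n * ((n : ℕ) / 2 : ℝ)
              * (1 / (gammaMN m (n : ℕ) * gammaMN m (r : ℕ)))
              * (1 / (((n : ℕ) : ℝ) + ((r : ℕ) : ℝ)) + 1 / (((n : ℕ) : ℝ) - ((r : ℕ) : ℝ)))
          else 0) := by
      intro n; split_ifs <;> ring
    simp only [Pi.smul_apply, smul_eq_mul, h, ← Finset.mul_sum, RingHom.id_apply]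
    ring

lemma auxL_injective (N : ℕ) (β : ℝ) (hβ0 : 0 ≤ β) (hq : β * (19/12) / π ^ 2 < 1)
    (m : ℕ) (hm : 1 ≤ m) : Function.Injective (auxL N β m) := by
  rw [← LinearMap.ker_eq_bot, LinearMap.ker_eq_bot']
  intro x hx0
  have hx : ∀ r : Fin (N + 1), x r =
      β * (∑ n : Fin (N + 1),
          if Odd ((n : ℕ) + (r : ℕ)) then
            x n * ((n : ℕ) / 2 : ℝ)
              * (1 / (gammaMN m (n : ℕ) * gammaMN m (r : ℕ)))
              * (1 / (((n : ℕ) : ℝ) + ((r : ℕ) : ℝ)) + 1 / (((n : ℕ) : ℝ) - ((r : ℕ) : ℝ)))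
          else 0) := by
    intro r
    have h := congrFun hx0 r
    simp only [auxL, LinearMap.coe_mk, AddHom.coe_mk, Pi.zero_apply] at h
    linarith
  have hgpos : ∀ r : Fin (N + 1), 0 < gammaMN m (r : ℕ) := fun r => gammaMN_pos m r hm
  set y : Fin (N + 1) → ℝ := fun r => x r * (1 / gammaMN m (r : ℕ)) with hy
  set s : ℝ := ∑ r : Fin (N + 1), x r ^ 2 with hs
  have hsnn : 0 ≤ s := Finset.sum_nonneg fun r _ => sq_nonneg _
  -- Step 1: s = β * D
  set D : ℝ := ∑ r : Fin (N + 1), ∑ n : Fin (N + 1),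
      (if Odd ((n : ℕ) + (r : ℕ)) then
        x r * x n * (((n : ℕ) / 2 : ℝ)
          * (1 / (gammaMN m (n : ℕ) * gammaMN m (r : ℕ)))
          * (1 / (((n : ℕ) : ℝ) + ((r : ℕ) : ℝ)) + 1 / (((n : ℕ) : ℝ) - ((r : ℕ) : ℝ))))
      else 0) with hD
  have hsD : s = β * D := by
    rw [hs, hD, Finset.mul_sum]
    refine Finset.sum_congr rfl fun r _ => ?_
    rw [pow_two]
    nth_rewrite 2 [hx r]
    rw [← mul_assoc, mul_comm (x r) β, mul_assoc, Finset.mul_sum]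
    congr 1
    refine Finset.sum_congr rfl fun n _ => ?_
    split_ifs <;> ring
  -- Step 2: symmetrization
  set E : ℝ := ∑ r : Fin (N + 1), ∑ n : Fin (N + 1),
      (if Odd ((n : ℕ) + (r : ℕ)) then y r * y n else 0) with hE
  have hsym : 2 * D = E := by
    have hswap : D = ∑ r : Fin (N + 1), ∑ n : Fin (N + 1),
        (if Odd ((n : ℕ) + (r : ℕ)) then
          x r * x n * (((r : ℕ) / 2 : ℝ)
            * (1 / (gammaMN m (r : ℕ) * gammaMN m (n : ℕ)))
            * (1 / (((r : ℕ) : ℝ) + ((n : ℕ) : ℝ)) + 1 / (((r : ℕ) : ℝ) - ((n : ℕ) : ℝ))))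
        else 0) := by
      rw [hD, Finset.sum_comm]
      refine Finset.sum_congr rfl fun r _ => Finset.sum_congr rfl fun n _ => ?_
      rw [Nat.add_comm (r : ℕ) (n : ℕ)]
      split_ifs <;> ring
    rw [two_mul]
    nth_rewrite 2 [hswap]
    rw [hD, hE, ← Finset.sum_add_distrib]
    refine Finset.sum_congr rfl fun r _ => ?_
    rw [← Finset.sum_add_distrib]
    refine Finset.sum_congr rfl fun n _ => ?_
    by_cases hodd : Odd ((n : ℕ) + (r : ℕ))
    · simp only [hodd, if_true, hy]
      have hne : (n : ℕ) ≠ (r : ℕ) := by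
        intro h
        rw [h] at hodd
        exact (Nat.not_odd_iff_even.mpr ⟨(r : ℕ), rfl⟩) hodd
      have hne' : ((n : ℕ) : ℝ) ≠ ((r : ℕ) : ℝ) := by exact_mod_cast hne
      have hsum0 : (n : ℕ) + (r : ℕ) ≠ 0 := by
        intro h; rw [h] at hodd; exact (by decide : ¬ Odd 0) hodd
      have hsum0' : ((n : ℕ) : ℝ) + ((r : ℕ) : ℝ) ≠ 0 := by
        have : (((n : ℕ) + (r : ℕ) : ℕ) : ℝ) ≠ 0 := Nat.cast_ne_zero.mpr hsum0
        push_cast at this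
        exact this
      have hdiff : ((n : ℕ) : ℝ) - ((r : ℕ) : ℝ) ≠ 0 := sub_ne_zero.mpr hne'
      have hdiff' : ((r : ℕ) : ℝ) - ((n : ℕ) : ℝ) ≠ 0 :=
        sub_ne_zero.mpr (Ne.symm hne')
      have hgn := (hgpos n).ne'
      have hgr := (hgpos r).ne'
      have hkey : ((n:ℕ) / 2 : ℝ) * (1 / (gammaMN m (n : ℕ) * gammaMN m (r : ℕ)))
            * (1 / (((n : ℕ) : ℝ) + ((r : ℕ) : ℝ)) + 1 / (((n : ℕ) : ℝ) - ((r : ℕ) : ℝ)))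
          + ((r:ℕ) / 2 : ℝ) * (1 / (gammaMN m (r : ℕ) * gammaMN m (n : ℕ)))
            * (1 / (((r : ℕ) : ℝ) + ((n : ℕ) : ℝ)) + 1 / (((r : ℕ) : ℝ) - ((n : ℕ) : ℝ)))
          = (1 / gammaMN m (r : ℕ)) * (1 / gammaMN m (n : ℕ)) := by
        rw [add_comm (((r : ℕ) : ℝ)) (((n : ℕ) : ℝ))]
        field_simp
        ring
      linear_combination (x r * x n) * hkey
    · simp [hodd]
  -- Step 3: parity factorization
  set P : ℝ := ∑ r : Fin (N + 1), (if Odd (r : ℕ) then y r else 0) with hP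
  set Q : ℝ := ∑ r : Fin (N + 1), (if Odd (r : ℕ) then 0 else y r) with hQ
  have hEPQ : E = P * Q + Q * P := by
    have hpt : ∀ r n : Fin (N + 1),
        (if Odd ((n : ℕ) + (r : ℕ)) then y r * y n else 0)
        = (if Odd (r : ℕ) then y r else 0) * (if Odd (n : ℕ) then 0 else y n)
          + (if Odd (r : ℕ) then 0 else y r) * (if Odd (n : ℕ) then y n else 0) := by
      intro r n
      rcases Nat.even_or_odd (r : ℕ) with hr | hr <;>
        rcases Nat.even_or_odd (n : ℕ) with hn | hn
      · have h1 : ¬ Odd ((n : ℕ) + (r : ℕ)) := Nat.not_odd_iff_even.mpr (hn.add hr)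
        simp [h1, Nat.not_odd_iff_even.mpr hr, Nat.not_odd_iff_even.mpr hn]
      · have h1 : Odd ((n : ℕ) + (r : ℕ)) := hn.add_even hr
        simp [h1, Nat.not_odd_iff_even.mpr hr, hn]
      · have h1 : Odd ((n : ℕ) + (r : ℕ)) := hn.add_odd hr
        simp [h1, hr, Nat.not_odd_iff_even.mpr hn, mul_comm]
      · have h1 : ¬ Odd ((n : ℕ) + (r : ℕ)) := Nat.not_odd_iff_even.mpr (hn.add_odd hr)
        simp [h1, hr, hn]
    rw [hE]
    simp only [hpt, Finset.sum_add_distrib, ← Finset.mul_sum]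
    rw [← Finset.sum_mul, ← Finset.sum_mul]
  have hPQsum : P + Q = ∑ r : Fin (N + 1), y r := by
    rw [hP, hQ, ← Finset.sum_add_distrib]
    refine Finset.sum_congr rfl fun r _ => ?_
    split_ifs <;> ring
  set T : ℝ := ∑ r : Fin (N + 1), y r with hT
  have hE_le : E ≤ T ^ 2 / 2 := by
    rw [hEPQ, ← hPQsum]
    nlinarith [sq_nonneg (P - Q)]
  -- Step 4: Cauchy–Schwarz
  set S : ℝ := ∑ r : Fin (N + 1), (1 / gammaMN m (r : ℕ)) ^ 2 with hS
  have hCS : T ^ 2 ≤ s * S := by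
    rw [hT, hs, hS]
    exact Finset.sum_mul_sq_le_sq_mul_sq Finset.univ x (fun r => 1 / gammaMN m (r : ℕ))
  -- Step 5: bound on S
  have hSle : S ≤ 4 / π ^ 2 * (19/12) := by
    have h1 : S ≤ ∑ r : Fin (N + 1), 4 / π ^ 2 * (1 / (((r : ℕ) : ℝ) ^ 2 + 4)) := by
      rw [hS]
      exact Finset.sum_le_sum fun r _ => one_div_gammaMN_sq_le m r hm
    have h2 : ∑ r : Fin (N + 1), 4 / π ^ 2 * (1 / (((r : ℕ) : ℝ) ^ 2 + 4))
        = 4 / π ^ 2 * ∑ r ∈ Finset.range (N + 1), (1:ℝ) / ((r : ℝ) ^ 2 + 4) := by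
      rw [← Finset.mul_sum]
      congr 1
      exact Fin.sum_univ_eq_sum_range (fun i => (1:ℝ) / ((i : ℝ) ^ 2 + 4)) (N + 1)
    have h3 : (0:ℝ) ≤ 4 / π ^ 2 := by positivity
    have h4 := sum_one_div_sq_add_four_le (N + 1)
    calc S ≤ 4 / π ^ 2 * ∑ r ∈ Finset.range (N + 1), (1:ℝ) / ((r : ℝ) ^ 2 + 4) := by
          rw [← h2]; exact h1
      _ ≤ 4 / π ^ 2 * (19/12) := by nlinarith
  have hSnn : 0 ≤ S := Finset.sum_nonneg fun r _ => sq_nonneg _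
  -- Step 6: conclude
  have hD_le : D ≤ s * S / 4 := by linarith
  have hfinal : s ≤ β * (19/12) / π ^ 2 * s := by
    have hbs : 0 ≤ β * s := mul_nonneg hβ0 hsnn
    have h5 : β * s * S ≤ β * s * (4 / π ^ 2 * (19/12)) :=
      mul_le_mul_of_nonneg_left hSle hbs
    have h6 : s ≤ β * (s * S / 4) := by
      calc s = β * D := hsD
        _ ≤ β * (s * S / 4) := mul_le_mul_of_nonneg_left hD_le hβ0
    have h7 : β * (s * S / 4) = β * s * S / 4 := by ring
    have h8 : β * s * (4 / π ^ 2 * (19/12)) / 4 = β * (19/12) / π ^ 2 * s := by ring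
    calc s ≤ β * s * S / 4 := by rw [← h7]; exact h6
      _ ≤ β * s * (4 / π ^ 2 * (19/12)) / 4 := by linarith
      _ = β * (19/12) / π ^ 2 * s := h8
  have hs0 : s = 0 := by
    by_contra hne
    have hspos : 0 < s := lt_of_le_of_ne hsnn (Ne.symm hne)
    have := mul_lt_mul_of_pos_right hq hspos
    rw [one_mul] at this
    linarith
  have hsum0 : ∑ r : Fin (N + 1), x r ^ 2 = 0 := by rw [← hs]; exact hs0
  have hterm := (Finset.sum_eq_zero_iff_of_nonneg fun r _ => sq_nonneg (x r)).mp hsum0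
  funext r
  have h2 := hterm r (Finset.mem_univ r)
  have h3 : x r = 0 := by
    have := sq_eq_zero_iff.mp h2
    exact this
  simpa using h3

/-- If `0 ≤ β̂ < π²/(2c)`, then for every `F ∈ ℝ^{M×(N+1)}` the algebraic system `𝒫(B) = 0`
admits a solution `B ∈ ℝ^{M×(N+1)}`. -/
theorem Pop_surjective_at_zero (M N : ℕ) (hM : 1 ≤ M) (hN : 1 ≤ N) (β : ℝ)
    (hβ0 : 0 ≤ β) (hβ : β < π ^ 2 / (2 * cConst))
    (F : Fin M → Fin (N + 1) → ℝ) :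
    ∃ B : Fin M → Fin (N + 1) → ℝ, Pop M N β F B = 0 := by
  classical
  have hc7 := cConst_ge
  have hc0 := cConst_pos
  have hπ := Real.pi_pos
  have hq : β * (19/12) / π ^ 2 < 1 := by
    rw [div_lt_one (by positivity)]
    have h1 : β * (19/12) < π ^ 2 / (2 * cConst) * (19/12) :=
      mul_lt_mul_of_pos_right hβ (by norm_num)
    have h2 : π ^ 2 / (2 * cConst) * (19/12) ≤ π ^ 2 := by
      rw [div_mul_eq_mul_div, div_le_iff₀ (by linarith)]
      nlinarith [sq_nonneg π]
    linarith
  have hsurj : ∀ l : Fin M, Function.Surjective (auxL N β ((l : ℕ) + 1)) := fun l =>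
    LinearMap.injective_iff_surjective.mp
      (auxL_injective N β hβ0 hq ((l : ℕ) + 1) (Nat.le_add_left 1 _))
  choose B hB using fun l => hsurj l (F l)
  refine ⟨B, ?_⟩
  funext l r
  have h := congrFun (hB l) r
  simp only [auxL, LinearMap.coe_mk, AddHom.coe_mk] at h
  simp only [Pop, Pi.zero_apply]
  linarith
end

section
/- The series ∑_{n=0}^{∞} 1/(4 + n²) converges and its sum equals (1/8)·(2π·coth(2π) + 1), where coth is the real hyperbolic cotangent. -/
/-!
Evaluate the Mittag-Leffler expansion `π cot (π z) = 1/z + ∑_{n ≥ 1} (1/(z - n) + 1/(z + n))` at the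
purely imaginary point `z = a i`: there `π cot (π z) = -π coth (π a) i` and the `n`-th term is
`-2 a i / (a² + n²)`, which gives `∑_{n ≥ 1} 1/(a² + n²) = (π a coth (π a) - 1) / (2 a²)`.
Add the term `n = 0` and take `a = 2`.
-/

open Real

section

open Complex

theorem hasSum_cotTerm {x : ℂ} (hx : x ∈ integerComplement) :
    HasSum (cotTerm x) (π * cot (π * x) - 1 / x) :=
  (summable_cotTerm hx).hasSum_iff_tendsto_nat.mpr (tendsto_logDeriv_euler_cot_sub hx)

theorem Complex.ofReal_mul_I_mem_integerComplement {a : ℝ} (ha : a ≠ 0) :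
    (a * I : ℂ) ∈ integerComplement := by
  rintro ⟨n, hn⟩
  simpa [eq_comm, ha] using congrArg im hn

theorem Complex.cot_ofReal_mul_I (a : ℝ) : cot (a * I) = -(cothR a * I) := by
  rw [Complex.cot, cos_mul_I, sin_mul_I, cothR]
  by_cases h : Real.sinh a = 0
  · simp [h, ← ofReal_sinh]
  · push_cast
    field_simp
    rw [I_sq]
    ring

theorem cotTerm_ofReal_mul_I (a : ℝ) (n : ℕ) :
    cotTerm (a * I) n = ((1 / (a ^ 2 + (n + 1) ^ 2) : ℝ) : ℂ) * -(2 * a * I) := by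
  have hpos : (0 : ℝ) < a ^ 2 + (n + 1) ^ 2 := by positivity
  have hne : -((a ^ 2 + (n + 1) ^ 2 : ℝ) : ℂ) ≠ 0 := neg_ne_zero.mpr (ofReal_ne_zero.mpr hpos.ne')
  have hprod : (a * I - (n + 1)) * (a * I + (n + 1)) = -((a ^ 2 + (n + 1) ^ 2 : ℝ) : ℂ) := by
    push_cast
    ring_nf
    rw [I_sq]
    ring
  have h₁ : a * I - (n + 1) ≠ 0 := left_ne_zero_of_mul (hprod ▸ hne)
  have h₂ : a * I + (n + 1) ≠ 0 := right_ne_zero_of_mul (hprod ▸ hne)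
  rw [cotTerm, div_add_div _ _ h₁ h₂, hprod]
  push_cast
  field_simp
  ring

theorem hasSum_one_div_sq_add_succ_sq {a : ℝ} (ha : a ≠ 0) :
    HasSum (fun n : ℕ => 1 / (a ^ 2 + ((n : ℝ) + 1) ^ 2))
      ((π * a * cothR (π * a) - 1) / (2 * a ^ 2)) := by
  have ha' : (a : ℂ) ≠ 0 := ofReal_ne_zero.mpr ha
  have hc : -(2 * a * I) ≠ 0 := by simp [ha, I_ne_zero]
  have hval : π * cot (π * (a * I)) - 1 / (a * I)
      = (((π * a * cothR (π * a) - 1) / (2 * a ^ 2) : ℝ) : ℂ) * -(2 * a * I) := by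
    rw [← mul_assoc, ← ofReal_mul, cot_ofReal_mul_I]
    push_cast
    field_simp
    ring_nf
    rw [I_sq]
    ring
  have h := hasSum_cotTerm (ofReal_mul_I_mem_integerComplement ha)
  rwa [funext (cotTerm_ofReal_mul_I a), hval, hasSum_mul_right_iff hc, hasSum_ofReal] at h

end

theorem hasSum_one_div_sq_add_sq {a : ℝ} (ha : a ≠ 0) :
    HasSum (fun n : ℕ => 1 / (a ^ 2 + (n : ℝ) ^ 2))
      ((π * a * cothR (π * a) + 1) / (2 * a ^ 2)) := by
  have h := HasSum.zero_add (f := fun n : ℕ => 1 / (a ^ 2 + (n : ℝ) ^ 2))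
    (by simpa only [Nat.cast_succ] using hasSum_one_div_sq_add_succ_sq ha)
  convert h using 1
  field_simp
  ring

/-- The series `∑_{n=0}^∞ 1/(4 + n²)` converges and its sum equals
`(1/8)·(2π·coth(2π) + 1)`. -/
theorem sum_one_div_four_add_sq :
    Summable (fun n : ℕ => 1 / (4 + (n : ℝ) ^ 2))
      ∧ ∑' n : ℕ, 1 / (4 + (n : ℝ) ^ 2) = (1/8) * (2 * π * cothR (2 * π) + 1) := by
  have h := hasSum_one_div_sq_add_sq (two_ne_zero : (2 : ℝ) ≠ 0)
  norm_num only [mul_comm π 2] at h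
  refine ⟨h.summable, h.tsum_eq.trans ?_⟩
  ring
end
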